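/- arXiv:2312.00594 — 2 statements merged into one kernel-verified Lean document; each statement's English description precedes it below -/
import Mathlib

section
/- Let $G$ be an H-type group and for $\mu \in \mathfrak{z}^* \setminus \{0\}$ let $R_\mu$ be the orthogonal transformation with $J_\mu = |\mu| R_\mu J R_\mu^t$ where $J$ is the standard complex structure. Then the map $\alpha_\mu : G \to \mathbb{H}_n$, $\alpha_\mu(x,u) = (R_\mu^t x, \mu \cdot u / |\mu|)$, is a group homomorphism from $G$ to the Heisenberg group $\mathbb{H}_n$. -/
open scoped RealInnerProductSpace

theorem LinearIsometryEquiv.inner_smul_conj_apply {E : Type*} [NormedAddCommGroup E]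
    [InnerProductSpace ℝ E] (c : ℝ) (J : E →ₗ[ℝ] E) (R : E ≃ₗᵢ[ℝ] E) (x y : E) :
    ⟪c • R (J (R.symm x)), y⟫ = c * ⟪J (R.symm x), R.symm y⟫ := by
  rw [real_inner_smul_left, R.inner_map_eq_flip]

/-- Let `G = ℝ^{2n} × ℝ^m` be an H-type group with product
`(x,u)(x',u') = (x+x', u+u'+½ω(x,x'))`, where `⟪μ, ω(x,x')⟫ = ⟪J_μ x, x'⟫`, and let
`ℍ_n = ℝ^{2n} × ℝ` be the Heisenberg group with product
`(z,t)(z',t') = (z+z', t+t'+½⟪J z, z'⟫)`, `J` the standard complex structure.  For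
`μ ≠ 0` let `R_μ` be the orthogonal transformation with `J_μ = |μ| R_μ J R_μᵗ`.  Then
`α_μ(x,u) = (R_μᵗ x, μ·u/|μ|)` is a group homomorphism `G → ℍ_n`. -/
theorem alpha_mu_is_homomorphism (n m : ℕ) (μ : EuclideanSpace ℝ (Fin m)) (hμ : μ ≠ 0)
    (Jstd Jμ : EuclideanSpace ℝ (Fin (2 * n)) →ₗ[ℝ] EuclideanSpace ℝ (Fin (2 * n)))
    (Rμ : EuclideanSpace ℝ (Fin (2 * n)) ≃ₗᵢ[ℝ] EuclideanSpace ℝ (Fin (2 * n)))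
    (hJμ : ∀ x, Jμ x = ‖μ‖ • (Rμ (Jstd (Rμ.symm x))))
    (ω : EuclideanSpace ℝ (Fin (2 * n)) →ₗ[ℝ] EuclideanSpace ℝ (Fin (2 * n)) →ₗ[ℝ]
      EuclideanSpace ℝ (Fin m))
    (hω : ∀ x x', ⟪μ, ω x x'⟫ = ⟪Jμ x, x'⟫)
    (mulG : (EuclideanSpace ℝ (Fin (2 * n)) × EuclideanSpace ℝ (Fin m)) →
      (EuclideanSpace ℝ (Fin (2 * n)) × EuclideanSpace ℝ (Fin m)) →
      (EuclideanSpace ℝ (Fin (2 * n)) × EuclideanSpace ℝ (Fin m)))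
    (hmulG : ∀ p q, mulG p q = (p.1 + q.1, p.2 + q.2 + (1 / 2 : ℝ) • ω p.1 q.1))
    (mulH : (EuclideanSpace ℝ (Fin (2 * n)) × ℝ) → (EuclideanSpace ℝ (Fin (2 * n)) × ℝ) →
      (EuclideanSpace ℝ (Fin (2 * n)) × ℝ))
    (hmulH : ∀ p q, mulH p q = (p.1 + q.1, p.2 + q.2 + (1 / 2 : ℝ) * ⟪Jstd p.1, q.1⟫))
    (α : (EuclideanSpace ℝ (Fin (2 * n)) × EuclideanSpace ℝ (Fin m)) →
      (EuclideanSpace ℝ (Fin (2 * n)) × ℝ))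
    (hα : ∀ p, α p = (Rμ.symm p.1, ⟪μ, p.2⟫ / ‖μ‖)) :
    ∀ a b, α (mulG a b) = mulH (α a) (α b) := by
  intro a b
  have hμ_norm : ‖μ‖ ≠ 0 := norm_ne_zero_iff.mpr hμ
  have hω_conj : ∀ x x', ⟪μ, ω x x'⟫ = ‖μ‖ * ⟪Jstd (Rμ.symm x), Rμ.symm x'⟫ := fun x x' => by
    rw [hω, hJμ, Rμ.inner_smul_conj_apply]
  rw [hmulG, hα, hα, hα, hmulH]
  refine Prod.ext (map_add _ _ _) ?_
  simp only [inner_add_right, real_inner_smul_right, hω_conj]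
  field_simp
end

section
/- Let $\gamma_{\nu,\lambda}(s) = (J_\lambda^{-1} e^{sJ_\lambda}\nu,\; \tfrac{s\lambda}{2|\lambda|^2})$ in an H-type group $G$, with $\lambda \neq 0$ and $|\nu| = 1$. Then for every integer $k$, $\gamma_{\nu,\lambda}(s + 2k\pi|\lambda|^{-1}) = (0, k\pi|\lambda|^{-2}\hat\lambda)\,\gamma_{\nu,\lambda}(s)$, where $\hat\lambda = \lambda/|\lambda|$ and the product is the group multiplication of $G$. -/
open scoped RealInnerProductSpace

set_option maxHeartbeats 1000000

lemma exp_eq_one_of_sq {E : Type*} [NormedRing E] [NormedAlgebra ℝ E] [CompleteSpace E]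
    (A : E) (c : ℝ) (hc : c ≠ 0) (hA : A * A = -(c ^ 2) • 1)
    (hcos : Real.cos c = 1) (hsin : Real.sin c = 0) :
    NormedSpace.exp A = 1 := by
  have hmap : ∀ z w : ℂ, (z * w).re • (1 : E) + ((z * w).im / c) • A =
      (z.re • (1 : E) + (z.im / c) • A) * (w.re • (1 : E) + (w.im / c) • A) := by
    intro z w
    have : (z.re • (1 : E) + (z.im / c) • A) * (w.re • (1 : E) + (w.im / c) • A)
        = (z.re * w.re) • (1 : E) + ((z.re * w.im / c + z.im * w.re / c)) • A
          + (z.im / c * (w.im / c)) • (A * A) := by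
      simp [mul_add, add_mul, smul_mul_assoc, mul_smul_comm, smul_smul, add_smul]
      ring_nf
      abel
    rw [this, hA, smul_smul, Complex.mul_re, Complex.mul_im]
    have h1 : z.im / c * (w.im / c) * -c ^ 2 = -(z.im * w.im) := by
      rw [div_mul_div_comm, div_mul_eq_mul_div, mul_neg, neg_div, neg_inj, pow_two,
        mul_div_assoc, div_self (mul_ne_zero hc hc), mul_one]
    rw [h1]
    module
  let φ : ℂ →+* E :=
    { toFun := fun z => z.re • (1 : E) + (z.im / c) • A
      map_one' := by simp
      map_mul' := fun z w => hmap z w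
      map_zero' := by simp
      map_add' := fun z w => by
        simp [Complex.add_re, Complex.add_im, add_smul, add_div]
        abel }
  have hφcont : Continuous φ := by
    simp only [φ, RingHom.coe_mk, MonoidHom.coe_mk, OneHom.coe_mk]
    fun_prop
  have hAeq : φ ((c : ℂ) * Complex.I) = A := by
    simp [φ, div_self hc]
  have := NormedSpace.map_exp_of_mem_ball (𝕂 := ℝ) φ hφcont ((c : ℂ) * Complex.I)
    ((NormedSpace.expSeries_radius_eq_top ℝ ℂ).symm ▸ edist_lt_top _ _)
  rw [hAeq] at this
  rw [← this]
  have hexp : NormedSpace.exp ((c : ℂ) * Complex.I) = 1 := by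
    rw [← Complex.exp_eq_exp_ℂ]
    rw [Complex.exp_mul_I]
    rw [← Complex.ofReal_cos, ← Complex.ofReal_sin, hcos, hsin]
    simp
  rw [hexp]
  simp [φ]

/-- In an H-type group `G = ℝ^{2n} × ℝ^m` (product
`(x,u)(x',u') = (x+x', u+u'+½ω(x,x'))`, `⟪λ, ω(x,y)⟫ = ⟪J_λ x, y⟫`,
`J_λ² = -|λ|² Id`), for `λ ≠ 0`, `|ν| = 1`, the geodesic
`γ_{ν,λ}(s) = (J_λ⁻¹ e^{sJ_λ} ν, sλ/(2|λ|²))` (note `J_λ⁻¹ = -J_λ/|λ|²`) satisfies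
`γ_{ν,λ}(s + 2kπ|λ|⁻¹) = (0, kπ|λ|⁻²λ̂) γ_{ν,λ}(s)` for every integer `k`. -/
theorem geodesic_helical_symmetry (n m : ℕ)
    (lam : EuclideanSpace ℝ (Fin m)) (hlam : lam ≠ 0)
    (Jlam : EuclideanSpace ℝ (Fin (2 * n)) →L[ℝ] EuclideanSpace ℝ (Fin (2 * n)))
    (hJ2 : ∀ x, Jlam (Jlam x) = -(‖lam‖ ^ 2) • x)
    (ω : EuclideanSpace ℝ (Fin (2 * n)) →ₗ[ℝ] EuclideanSpace ℝ (Fin (2 * n)) →ₗ[ℝ]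
      EuclideanSpace ℝ (Fin m))
    (hω : ∀ x y, ⟪lam, ω x y⟫ = ⟪Jlam x, y⟫)
    (mul : (EuclideanSpace ℝ (Fin (2 * n)) × EuclideanSpace ℝ (Fin m)) →
      (EuclideanSpace ℝ (Fin (2 * n)) × EuclideanSpace ℝ (Fin m)) →
      (EuclideanSpace ℝ (Fin (2 * n)) × EuclideanSpace ℝ (Fin m)))
    (hmul : ∀ p q, mul p q = (p.1 + q.1, p.2 + q.2 + (1 / 2 : ℝ) • ω p.1 q.1))
    (ν : EuclideanSpace ℝ (Fin (2 * n))) (hν : ‖ν‖ = 1)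
    (γ : ℝ → (EuclideanSpace ℝ (Fin (2 * n)) × EuclideanSpace ℝ (Fin m)))
    (hγ : ∀ s, γ s = ((-(‖lam‖ ^ 2)⁻¹) • (Jlam ((NormedSpace.exp (s • Jlam)) ν)),
      (s / (2 * ‖lam‖ ^ 2)) • lam)) :
    ∀ (s : ℝ) (k : ℤ),
      γ (s + 2 * k * Real.pi / ‖lam‖) =
        mul (0, ((k * Real.pi / ‖lam‖ ^ 2 : ℝ)) • (‖lam‖⁻¹ • lam)) (γ s) := by
  intro s k
  have hL : ‖lam‖ ≠ 0 := norm_ne_zero_iff.mpr hlam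
  set T : ℝ := 2 * k * Real.pi / ‖lam‖ with hT
  -- exp((s+T)•J) ν = exp(s•J) ν
  have hexpT : NormedSpace.exp (T • Jlam) = 1 := by
    rcases eq_or_ne (k : ℝ) 0 with hk | hk
    · have : T = 0 := by rw [hT, hk]; ring
      rw [this, zero_smul ℝ Jlam, NormedSpace.exp_zero]
    · apply exp_eq_one_of_sq (T • Jlam) (2 * k * Real.pi)
      · positivity
      · ext x : 1
        have : (T • Jlam) ((T • Jlam) x) = (T * T) • Jlam (Jlam x) := by
          simp [smul_smul, map_smul]
        simp only [ContinuousLinearMap.mul_apply, this, hJ2, smul_smul]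
        simp only [ContinuousLinearMap.smul_apply, ContinuousLinearMap.one_apply]
        congr 1
        rw [hT]
        field_simp
      · have : 2 * (k : ℝ) * Real.pi = (k : ℤ) * (2 * Real.pi) := by push_cast; ring
        rw [this, Real.cos_int_mul_two_pi]
      · have : 2 * (k : ℝ) * Real.pi = ((2 * k : ℤ) : ℝ) * Real.pi := by push_cast; ring
        rw [this, Real.sin_int_mul_pi]
  have hexpadd : NormedSpace.exp ((s + T) • Jlam) ν = NormedSpace.exp (s • Jlam) ν := by
    have hcomm : Commute (s • Jlam) (T • Jlam) := by
      have h : (s • Jlam) * (T • Jlam) = (T • Jlam) * (s • Jlam) := by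
        ext x
        simp [ContinuousLinearMap.mul_apply, map_smul, smul_smul, mul_comm]
      exact h
    have hsplit : (s + T) • Jlam = s • Jlam + T • Jlam := by
      ext x; simp [add_smul]
    rw [hsplit, NormedSpace.exp_add_of_commute_of_mem_ball (𝕂 := ℝ) hcomm
      ((NormedSpace.expSeries_radius_eq_top ℝ
        (EuclideanSpace ℝ (Fin (2 * n)) →L[ℝ] EuclideanSpace ℝ (Fin (2 * n)))).symm ▸ edist_lt_top _ _)
      ((NormedSpace.expSeries_radius_eq_top ℝ
        (EuclideanSpace ℝ (Fin (2 * n)) →L[ℝ] EuclideanSpace ℝ (Fin (2 * n)))).symm ▸ edist_lt_top _ _), hexpT, mul_one]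
  rw [hγ, hγ, hmul]
  refine Prod.ext ?_ ?_
  · simp only [hexpadd]
    simp
  · simp only [map_zero, LinearMap.zero_apply, smul_zero, add_zero]
    rw [smul_smul, ← add_smul]
    congr 1
    rw [hT]
    field_simp
    ring
end
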